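/- For a, c > 0 and b ∈ ℝ, ∫₀^∞ (1/√(2πcλ)) · exp(−(b + a·λ)²/(2cλ)) dλ = (1/a)·exp(−2·max(a·b/c, 0)). -/

import Mathlib

/-!
With `α = a / √(2c)` and `β = b / √(2c)` the integrand is
`(2πc)^(-1/2) · e^{-(α√λ + β/√λ)²} / √λ`. For `G x = ∫₀ˣ e^{-t²}`, the function
`G (α√λ + β/√λ) + e^{-4αβ} G (α√λ - β/√λ)` is an antiderivative of `α e^{-(α√λ + β/√λ)²} / √λ`,
because the two squares differ by exactly `4αβ`. It tends to `(1 + e^{-4αβ}) √π / 2` as `λ → ∞`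
and to `sign β · (1 - e^{-4αβ}) √π / 2` as `λ → 0⁺`.
-/

open MeasureTheory Real Set Filter Topology

theorem integral_Ioi_of_hasDerivAt_of_nonneg_of_tendsto {g g' : ℝ → ℝ} {a l m : ℝ}
    (hderiv : ∀ x ∈ Ioi a, HasDerivAt g (g' x) x) (g'pos : ∀ x ∈ Ioi a, 0 ≤ g' x)
    (hga : Tendsto g (𝓝[>] a) (𝓝 m)) (hg : Tendsto g atTop (𝓝 l)) :
    ∫ x in Ioi a, g' x = l - m := by
  classical
  have hcont : ContinuousWithinAt (Function.update g a m) (Ici a) a := by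
    rwa [← Ioi_insert, continuousWithinAt_insert_self, continuousWithinAt_update_same,
      sdiff_singleton_eq_self self_notMem_Ioi]
  have hderiv' : ∀ x ∈ Ioi a, HasDerivAt (Function.update g a m) (g' x) x := fun x hx =>
    (hderiv x hx).congr_of_eventuallyEq <| (eventually_ne_nhds (ne_of_gt hx)).mono
      fun y hy => Function.update_of_ne hy _ _
  have hg' : Tendsto (Function.update g a m) atTop (𝓝 l) :=
    hg.congr' <| (eventually_ne_atTop a).mono fun y hy => (Function.update_of_ne hy _ _).symm
  simpa using integral_Ioi_of_hasDerivAt_of_nonneg hcont hderiv' g'pos hg'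

noncomputable def gaussPrimitive (x : ℝ) : ℝ := ∫ t in (0 : ℝ)..x, exp (-t ^ 2)

lemma hasDerivAt_gaussPrimitive (x : ℝ) : HasDerivAt gaussPrimitive (exp (-x ^ 2)) x :=
  ((by fun_prop : Continuous fun t : ℝ => exp (-t ^ 2)).integral_hasStrictDerivAt 0 x).hasDerivAt

lemma continuous_gaussPrimitive : Continuous gaussPrimitive :=
  continuous_iff_continuousAt.2 fun x => (hasDerivAt_gaussPrimitive x).continuousAt

lemma gaussPrimitive_neg (x : ℝ) : gaussPrimitive (-x) = -gaussPrimitive x := by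
  have h := intervalIntegral.integral_comp_neg (a := 0) (b := -x) (fun t : ℝ => exp (-t ^ 2))
  simp only [neg_sq, neg_zero, neg_neg] at h
  rw [gaussPrimitive, gaussPrimitive, h, intervalIntegral.integral_symm]

lemma tendsto_gaussPrimitive_atTop : Tendsto gaussPrimitive atTop (𝓝 (√π / 2)) := by
  have hint : IntegrableOn (fun t : ℝ => exp (-t ^ 2)) (Ioi 0) := by
    simpa using (integrable_exp_neg_mul_sq one_pos).integrableOn
  have hval : ∫ t in Ioi (0 : ℝ), exp (-t ^ 2) = √π / 2 := by
    simpa using integral_gaussian_Ioi 1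
  exact hval ▸ intervalIntegral_tendsto_integral_Ioi 0 hint tendsto_id

lemma tendsto_gaussPrimitive_atBot : Tendsto gaussPrimitive atBot (𝓝 (-(√π / 2))) := by
  have h := (tendsto_gaussPrimitive_atTop.comp tendsto_neg_atBot_atTop).neg
  simpa [Function.comp_def, gaussPrimitive_neg] using h

lemma hasDerivAt_mul_sqrt_add_div_sqrt (α β : ℝ) {l : ℝ} (hl : 0 < l) :
    HasDerivAt (fun l => α * √l + β / √l) ((α - β / l) / (2 * √l)) l := by
  have hsqrt := hasDerivAt_sqrt hl.ne'
  have hs : √l ≠ 0 := (sqrt_pos.2 hl).ne'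
  refine ((hsqrt.const_mul α).add ((hasDerivAt_const l β).div hsqrt hs)).congr_deriv ?_
  rw [sq_sqrt hl.le]
  field_simp
  ring

lemma tendsto_mul_sqrt_add_div_sqrt_atTop {α : ℝ} (hα : 0 < α) (β : ℝ) :
    Tendsto (fun l => α * √l + β / √l) atTop atTop :=
  tendsto_atTop_add_right_of_le' _ (-1) (tendsto_sqrt_atTop.const_mul_atTop hα) <|
    (tendsto_const_nhds.div_atTop tendsto_sqrt_atTop).eventually (eventually_ge_nhds (by norm_num))

lemma tendsto_sqrt_nhdsGT_zero : Tendsto (√·) (𝓝[>] 0) (𝓝[>] 0) :=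
  tendsto_nhdsWithin_of_tendsto_nhds_of_eventually_within _
    ((continuous_sqrt.tendsto' 0 0 sqrt_zero).mono_left nhdsWithin_le_nhds)
    (eventually_mem_nhdsWithin.mono fun _ hl => sqrt_pos.2 hl)

lemma tendsto_gaussPrimitive_mul_sqrt_add_div_sqrt_nhdsGT (α β : ℝ) :
    Tendsto (fun l => gaussPrimitive (α * √l + β / √l)) (𝓝[>] 0)
      (𝓝 (Real.sign β * (√π / 2))) := by
  have hinv : Tendsto (fun l : ℝ => (√l)⁻¹) (𝓝[>] 0) atTop :=
    tendsto_inv_nhdsGT_zero.comp tendsto_sqrt_nhdsGT_zero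
  have hmul : Tendsto (fun l : ℝ => α * √l) (𝓝[>] 0) (𝓝 0) := by
    simpa using ((continuous_sqrt.const_mul α).tendsto 0).mono_left nhdsWithin_le_nhds
  rcases lt_trichotomy β 0 with hβ | rfl | hβ
  · rw [Real.sign_of_neg hβ, neg_one_mul]
    exact tendsto_gaussPrimitive_atBot.comp <| tendsto_atBot_add_left_of_ge' _ 1
      (hmul.eventually (eventually_le_nhds one_pos))
      (by simpa [div_eq_mul_inv] using hinv.const_mul_atTop_of_neg hβ)
  · have h0 : gaussPrimitive 0 = 0 := intervalIntegral.integral_same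
    simpa [Real.sign_zero, h0, Function.comp_def] using
      (continuous_gaussPrimitive.tendsto 0).comp hmul
  · rw [Real.sign_of_pos hβ, one_mul]
    exact tendsto_gaussPrimitive_atTop.comp <| tendsto_atTop_add_left_of_le' _ (-1)
      (hmul.eventually (eventually_ge_nhds (by norm_num)))
      (by simpa [div_eq_mul_inv] using hinv.const_mul_atTop hβ)

lemma hasDerivAt_gaussPrimitive_add_exp_mul_gaussPrimitive (α β : ℝ) {l : ℝ} (hl : 0 < l) :
    HasDerivAt (fun l => gaussPrimitive (α * √l + β / √l)
        + exp (-4 * α * β) * gaussPrimitive (α * √l + -β / √l))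
      (α * (exp (-(α * √l + β / √l) ^ 2) / √l)) l := by
  have hs : √l ≠ 0 := (sqrt_pos.2 hl).ne'
  have hweight : exp (-4 * α * β) * exp (-(α * √l + -β / √l) ^ 2)
      = exp (-(α * √l + β / √l) ^ 2) := by
    rw [← exp_add]
    congr 1
    field_simp
    ring
  have hplus := (hasDerivAt_gaussPrimitive _).comp l (hasDerivAt_mul_sqrt_add_div_sqrt α β hl)
  have hminus :=
    (hasDerivAt_gaussPrimitive _).comp l (hasDerivAt_mul_sqrt_add_div_sqrt α (-β) hl)
  refine (hplus.add (hminus.const_mul _)).congr_deriv ?_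
  rw [← mul_assoc, hweight]
  field_simp
  ring

theorem integral_exp_neg_sq_mul_sqrt_add_div_sqrt {α : ℝ} (hα : 0 < α) (β : ℝ) :
    ∫ l in Ioi (0 : ℝ), exp (-(α * √l + β / √l) ^ 2) / √l
      = √π / α * exp (-4 * α * max β 0) := by
  set E := exp (-4 * α * β)
  have htop :=
    (tendsto_gaussPrimitive_atTop.comp (tendsto_mul_sqrt_add_div_sqrt_atTop hα β)).add
      ((tendsto_gaussPrimitive_atTop.comp
        (tendsto_mul_sqrt_add_div_sqrt_atTop hα (-β))).const_mul E)
  have hzero := (tendsto_gaussPrimitive_mul_sqrt_add_div_sqrt_nhdsGT α β).add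
    ((tendsto_gaussPrimitive_mul_sqrt_add_div_sqrt_nhdsGT α (-β)).const_mul E)
  have hFTC := integral_Ioi_of_hasDerivAt_of_nonneg_of_tendsto
    (fun l hl => hasDerivAt_gaussPrimitive_add_exp_mul_gaussPrimitive α β hl)
    (fun l _ => by positivity) hzero htop
  rw [integral_const_mul, Real.sign_neg] at hFTC
  rw [div_mul_eq_mul_div, eq_div_iff hα.ne', mul_comm, hFTC]
  rcases lt_trichotomy β 0 with hβ | rfl | hβ
  · rw [Real.sign_of_neg hβ, max_eq_right hβ.le, mul_zero, exp_zero]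
    ring
  · rw [show E = 1 by simp [E], Real.sign_zero, max_self, mul_zero, exp_zero]
    ring
  · rw [Real.sign_of_pos hβ, max_eq_left hβ.le]
    ring

lemma one_div_sqrt_mul_exp_eq {c : ℝ} (hc : 0 < c) (a b : ℝ) {l : ℝ} (hl : 0 < l) :
    1 / √(2 * π * c * l) * exp (-(b + a * l) ^ 2 / (2 * c * l))
      = 1 / (√π * √(2 * c)) * (exp (-(a / √(2 * c) * √l + b / √(2 * c) / √l) ^ 2) / √l) := by
  have hsqrt : √(2 * π * c * l) = √π * √(2 * c) * √l := by
    rw [show 2 * π * c * l = π * (2 * c) * l by ring, sqrt_mul (by positivity),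
      sqrt_mul (by positivity)]
  have hexp : -(b + a * l) ^ 2 / (2 * c * l) = -(a / √(2 * c) * √l + b / √(2 * c) / √l) ^ 2 := by
    field_simp
    rw [sq_sqrt (by positivity), sq_sqrt hl.le]
    ring
  rw [hsqrt, hexp]
  ring

theorem svm_pseudo_likelihood (a c b : ℝ) (ha : 0 < a) (hc : 0 < c) :
    ∫ l in Ioi (0 : ℝ),
        (1 / Real.sqrt (2 * π * c * l)) * Real.exp (-(b + a * l) ^ 2 / (2 * c * l))
      = (1 / a) * Real.exp (-2 * max (a * b / c) 0) := by
  have hs : 0 < √(2 * c) := by positivity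
  have hexponent : -4 * (a / √(2 * c)) * max (b / √(2 * c)) 0 = -2 * max (a * b / c) 0 := by
    rcases le_total b 0 with hb | hb
    · have hab : a * b / c ≤ 0 :=
        div_nonpos_of_nonpos_of_nonneg (mul_nonpos_of_nonneg_of_nonpos ha.le hb) hc.le
      rw [max_eq_right (div_nonpos_of_nonpos_of_nonneg hb hs.le), max_eq_right hab]
      ring
    · rw [max_eq_left (by positivity), max_eq_left (by positivity)]
      field_simp
      rw [sq_sqrt (by positivity)]
      ring
  rw [setIntegral_congr_fun measurableSet_Ioi fun l hl => one_div_sqrt_mul_exp_eq hc a b hl,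
    integral_const_mul, integral_exp_neg_sq_mul_sqrt_add_div_sqrt (div_pos ha hs), hexponent]
  field_simp
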